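/- arXiv:1305.3397 — 3 statements merged into one kernel-verified Lean document; each statement's English description precedes it below -/
import Mathlib

section
/- Let d ≥ 2, ε ∈ (0, 1/2) and let 1 ≤ s < N be integers. Then for every X_s ∈ (𝕋^d)^s, one has 𝒵♭_{(s+1,N)}(X_s) ≤ s (N−s) ε^d κ_d 𝒵_{N−s−1}. -/
open MeasureTheory Real

noncomputable section

/-- The unit torus `(ℝ/ℤ)^d`, with normalized Haar (Lebesgue) measure. -/
abbrev Torus (d : ℕ) := Fin d → AddCircle (1 : ℝ)

/-- Euclidean space `ℝ^d` (velocity space). -/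
abbrev Vel (d : ℕ) := EuclideanSpace ℝ (Fin d)

/-- The quotient (Euclidean) distance on the torus `(ℝ/ℤ)^d`. -/
noncomputable def tdist {d : ℕ} (x y : Torus d) : ℝ :=
  Real.sqrt (∑ i, dist (x i) (y i) ^ 2)

open scoped Classical in
/-- Real-valued indicator of a proposition. -/
noncomputable def ind (P : Prop) : ℝ := if P then 1 else 0

/-- The hard-sphere partition function
`𝒵_s = ∫_{(𝕋^d)^s} ∏_{1≤i<j≤s} 1_{d(x_i,x_j)>ε} dX_s`  (with `𝒵_0 = 𝒵_1 = 1`). -/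
noncomputable def Zpart (d : ℕ) (ε : ℝ) (s : ℕ) : ℝ :=
  ∫ X : Fin s → Torus d, ∏ p ∈ Finset.univ.filter (fun p : Fin s × Fin s => p.1 < p.2),
      ind (ε < tdist (X p.1) (X p.2))

/-- The Maxwellian `M_β(v) = (β/2π)^{d/2} exp(-β|v|²/2)`. -/
noncomputable def Maxwellian (d : ℕ) (β : ℝ) (v : Vel d) : ℝ :=
  (β / (2 * π)) ^ ((d : ℝ) / 2) * Real.exp (-(β / 2) * ‖v‖ ^ 2)

/-- Indicator of the exclusion domain `𝒟_ε^s` (in the position variables). -/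
noncomputable def exclInd (d : ℕ) (ε : ℝ) {s : ℕ} (X : Fin s → Torus d) : ℝ :=
  ind (∀ i j : Fin s, i ≠ j → ε < tdist (X i) (X j))

/-- The Gibbs density `M_{N,β}(Z_N) = 𝒵_N⁻¹ 1_{𝒟_ε^N}(X_N) M_β^{⊗N}(V_N)`. -/
noncomputable def gibbs (d : ℕ) (β ε : ℝ) (N : ℕ)
    (X : Fin N → Torus d) (V : Fin N → Vel d) : ℝ :=
  (Zpart d ε N)⁻¹ * exclInd d ε X * ∏ i, Maxwellian d β (V i)

/-- Concatenation of an `s`-tuple with an `(N-s)`-tuple into an `N`-tuple. -/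
def extend {α : Sort*} {s N : ℕ} (h : s ≤ N) (a : Fin s → α) (b : Fin (N - s) → α) :
    Fin N → α :=
  fun i => if hi : (i : ℕ) < s then a ⟨i, hi⟩ else b ⟨(i : ℕ) - s, by omega⟩

/-- The `s`-th marginal `M_{N,β}^{(s)}(Z_s) = ∫ M_{N,β}(Z_N) dz_{s+1}…dz_N`. -/
noncomputable def gibbsMarginal (d : ℕ) (β ε : ℝ) {s N : ℕ} (h : s ≤ N)
    (X : Fin s → Torus d) (V : Fin s → Vel d) : ℝ :=
  ∫ Y : (Fin (N - s) → Torus d) × (Fin (N - s) → Vel d),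
    gibbs d β ε N (extend h X Y.1) (extend h V Y.2)

/-- `𝒵♭_{(s+1,N)}(X_s) = ∫_{(𝕋^d)^{N-s}} (1 - ∏_{i≤s<j} 1_{d(x_i,x_j)>ε})
∏_{s+1≤i<j≤N} 1_{d(x_i,x_j)>ε} dx_{s+1}…dx_N`. -/
noncomputable def Zflat (d : ℕ) (ε : ℝ) {s N : ℕ} (_h : s ≤ N) (X : Fin s → Torus d) : ℝ :=
  ∫ Y : Fin (N - s) → Torus d,
    (1 - ∏ i : Fin s, ∏ j : Fin (N - s), ind (ε < tdist (X i) (Y j))) *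
      ∏ p ∈ Finset.univ.filter (fun p : Fin (N - s) × Fin (N - s) => p.1 < p.2),
        ind (ε < tdist (Y p.1) (Y p.2))

/-- `κ_d`, the Lebesgue volume of the unit ball of `ℝ^d`. -/
noncomputable def ballVol (d : ℕ) : ℝ :=
  (volume (Metric.ball (0 : Vel d) 1)).toReal


/-! If some `x_i` lies within `ε` of some `y_j`, the hard-core product of `(y_{s+1}, …, y_N)` is
at most that of the configuration with `y_j` removed. With the union bound
`1 - ∏ a_q ≤ ∑ (1 - a_q)` the integrand of `𝒵♭` is therefore dominated by `s (N - s)` terms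
`1_{d(x_i, y_j) ≤ ε} ∏_{k < l, k, l ≠ j} 1_{d(y_k, y_l) > ε}`. By Fubini each of them integrates
to `|B_ε(x_i)| 𝒵_{N-s-1}`, and a ball of radius `ε` in the torus has volume at most `ε^d κ_d`:
lifted to the fundamental cube `(-1/2, 1/2]^d`, it lies in the Euclidean ball of radius `ε`. -/

open Finset

lemma Finset.one_sub_prod_le_sum_one_sub {ι R : Type*} [CommRing R] [LinearOrder R]
    [IsStrictOrderedRing R] (s : Finset ι) {f : ι → R} (h0 : ∀ i, 0 ≤ f i) (h1 : ∀ i, f i ≤ 1) :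
    1 - ∏ i ∈ s, f i ≤ ∑ i ∈ s, (1 - f i) := by
  induction s using Finset.cons_induction with
  | empty => simp
  | cons a s _ _ =>
    rw [prod_cons, sum_cons]
    have hp0 : 0 ≤ ∏ i ∈ s, f i := prod_nonneg fun i _ => h0 i
    have hp1 : ∏ i ∈ s, f i ≤ 1 := prod_le_one (fun i _ => h0 i) fun i _ => h1 i
    nlinarith [h0 a, h1 a]

section Indicator

lemma ind_nonneg (P : Prop) : 0 ≤ ind P := by
  unfold ind; split <;> norm_num

lemma ind_le_one (P : Prop) : ind P ≤ 1 := by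
  unfold ind; split <;> norm_num

lemma one_sub_ind (P : Prop) : 1 - ind P = ind ¬P := by
  unfold ind; split_ifs <;> simp_all

lemma ind_eq_indicator {α : Type*} (p : α → Prop) :
    (fun a => ind (p a)) = {a | p a}.indicator 1 := by
  classical
  funext a
  by_cases h : p a <;> simp [ind, h]

lemma measurable_ind {α : Type*} [MeasurableSpace α] {p : α → Prop}
    (h : MeasurableSet {a | p a}) : Measurable fun a => ind (p a) := by
  rw [ind_eq_indicator]
  exact measurable_one.indicator h

lemma integral_ind {α : Type*} [MeasureSpace α] {p : α → Prop} (h : MeasurableSet {a | p a}) :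
    ∫ a, ind (p a) = volume.real {a | p a} := by
  rw [ind_eq_indicator]
  exact integral_indicator_one h

end Indicator

section TorusDistance

variable {d : ℕ}

lemma Measurable.tdist {α : Type*} [MeasurableSpace α] {f g : α → Torus d}
    (hf : Measurable f) (hg : Measurable g) : Measurable fun a => _root_.tdist (f a) (g a) :=
  (Finset.measurable_sum _ fun i _ => ((hf.eval (a := i)).dist (hg.eval (a := i))).pow_const 2).sqrt

lemma tdist_add_left (x y z : Torus d) : tdist (x + y) (x + z) = tdist y z := by
  simp [tdist]

lemma tdist_zero_coe_eq_norm {t : Fin d → ℝ} (ht : ∀ i, |t i| ≤ 1 / 2) :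
    tdist 0 (fun i => (t i : AddCircle (1 : ℝ))) = ‖WithLp.toLp 2 t‖ := by
  rw [tdist, EuclideanSpace.norm_eq]
  congr 1
  refine sum_congr rfl fun i _ => ?_
  rw [Pi.zero_apply, dist_zero_left,
    (AddCircle.norm_coe_eq_abs_iff (p := 1) one_ne_zero).2 (by simpa using ht i)]
  simp

lemma volume_real_tdist_le_le (x : Torus d) {ε : ℝ} (hε : 0 ≤ ε) :
    volume.real {y : Torus d | tdist x y ≤ ε} ≤ ε ^ d * ballVol d := by
  set S := {y : Torus d | tdist 0 y ≤ ε}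
  set cube := Set.univ.pi fun _ : Fin d => Set.Ioc (-(1 / 2) : ℝ) (-(1 / 2) + 1)
  set lift : (Fin d → ℝ) → Torus d := fun t i => (t i : AddCircle (1 : ℝ))
  have hlift : MeasurePreserving lift (volume.restrict cube) volume := by
    rw [volume_pi, Measure.restrict_pi_pi]
    exact measurePreserving_pi _ _ fun _ => UnitAddCircle.measurePreserving_mk _
  have hS : MeasurableSet S :=
    measurableSet_le (measurable_const.tdist measurable_id) measurable_const
  have htrans : volume {y : Torus d | tdist x y ≤ ε} = volume S := by
    rw [← measure_preimage_add volume x]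
    congr 1
    ext y
    simp [S, ← tdist_add_left x 0 y]
  have hcover : lift ⁻¹' S ∩ cube ⊆ WithLp.toLp 2 ⁻¹' Metric.closedBall (0 : Vel d) ε := by
    rintro t ⟨htS, htc⟩
    have ht : ∀ i, |t i| ≤ 1 / 2 := fun i =>
      abs_le.2 ⟨(htc i trivial).1.le, by linarith [(htc i trivial).2]⟩
    simpa [S, lift, tdist_zero_coe_eq_norm ht] using htS
  have hle : volume S ≤ volume (Metric.closedBall (0 : Vel d) ε) :=
    calc volume S = volume (lift ⁻¹' S ∩ cube) := by
          rw [← hlift.measure_preimage hS.nullMeasurableSet,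
            Measure.restrict_apply (hlift.measurable hS)]
      _ ≤ volume (WithLp.toLp 2 ⁻¹' Metric.closedBall (0 : Vel d) ε) := measure_mono hcover
      _ = _ := (PiLp.volume_preserving_toLp (Fin d)).measure_preimage
          measurableSet_closedBall.nullMeasurableSet
  rw [measureReal_def, htrans]
  calc (volume S).toReal ≤ (volume (Metric.closedBall (0 : Vel d) ε)).toReal :=
        ENNReal.toReal_mono measure_closedBall_lt_top.ne hle
    _ = ε ^ d * ballVol d := by
        rw [Measure.addHaar_closedBall _ _ hε, finrank_euclideanSpace_fin, ENNReal.toReal_mul,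
          ENNReal.toReal_ofReal (pow_nonneg hε d), ballVol]

end TorusDistance

lemma integral_mul_comp_succAbove {α : Type*} [MeasureSpace α] [SigmaFinite (volume : Measure α)]
    {m : ℕ} (j : Fin (m + 1)) (f : α → ℝ) (g : (Fin m → α) → ℝ) :
    ∫ Y : Fin (m + 1) → α, f (Y j) * g (Y ∘ j.succAbove) = (∫ y, f y) * ∫ Z, g Z := by
  rw [← integral_prod_mul, ← Measure.volume_eq_prod,
    ← (volume_preserving_piFinSuccAbove (fun _ => α) j).integral_comp']
  rfl

section Exclusion

variable {d : ℕ} (ε : ℝ)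

def exclProd {m : ℕ} (Y : Fin m → Torus d) : ℝ :=
  ∏ p ∈ univ.filter (fun p : Fin m × Fin m => p.1 < p.2), ind (ε < tdist (Y p.1) (Y p.2))

lemma Zpart_eq_integral_exclProd (m : ℕ) : Zpart d ε m = ∫ Y : Fin m → Torus d, exclProd ε Y := rfl

lemma exclProd_nonneg {m : ℕ} (Y : Fin m → Torus d) : 0 ≤ exclProd ε Y :=
  prod_nonneg fun _ _ => ind_nonneg _

lemma exclProd_le_one {m : ℕ} (Y : Fin m → Torus d) : exclProd ε Y ≤ 1 :=
  prod_le_one (fun _ _ => ind_nonneg _) fun _ _ => ind_le_one _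

lemma measurable_exclProd (m : ℕ) : Measurable (exclProd ε : (Fin m → Torus d) → ℝ) :=
  Finset.measurable_prod _ fun p _ => measurable_ind <|
    measurableSet_lt measurable_const ((measurable_pi_apply p.1).tdist (measurable_pi_apply p.2))

lemma exclProd_le_exclProd_comp {m n : ℕ} (Y : Fin n → Torus d) {e : Fin m → Fin n}
    (he : StrictMono e) : exclProd ε Y ≤ exclProd ε (Y ∘ e) := by
  classical
  have hinj : Set.InjOn (Prod.map e e) (univ.filter fun p : Fin m × Fin m => p.1 < p.2) :=
    fun _ _ _ _ h =>
      Prod.ext (he.injective (congrArg Prod.fst h)) (he.injective (congrArg Prod.snd h))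
  have himage : exclProd ε (Y ∘ e) = ∏ p ∈ (univ.filter fun p : Fin m × Fin m => p.1 < p.2).image
      (Prod.map e e), ind (ε < tdist (Y p.1) (Y p.2)) := by
    rw [prod_image hinj]
    rfl
  rw [himage]
  refine prod_le_prod_of_subset_of_le_one ?_ (fun _ _ => ind_nonneg _) fun _ _ _ => ind_le_one _
  intro p hp
  obtain ⟨q, hq, rfl⟩ := mem_image.1 hp
  simpa using he (mem_filter.1 hq).2

end Exclusion

section Bound

variable {d : ℕ} {ε : ℝ} {s m : ℕ}

lemma one_sub_prod_mul_exclProd_le (X : Fin s → Torus d) (Y : Fin (m + 1) → Torus d) :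
    (1 - ∏ i, ∏ j, ind (ε < tdist (X i) (Y j))) * exclProd ε Y ≤
      ∑ q : Fin s × Fin (m + 1), ind (tdist (X q.1) (Y q.2) ≤ ε) * exclProd ε (Y ∘ q.2.succAbove) :=
  calc (1 - ∏ i, ∏ j, ind (ε < tdist (X i) (Y j))) * exclProd ε Y
      = (1 - ∏ q : Fin s × Fin (m + 1), ind (ε < tdist (X q.1) (Y q.2))) * exclProd ε Y := by
        rw [Fintype.prod_prod_type]
    _ ≤ (∑ q : Fin s × Fin (m + 1), (1 - ind (ε < tdist (X q.1) (Y q.2)))) * exclProd ε Y :=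
        mul_le_mul_of_nonneg_right (one_sub_prod_le_sum_one_sub _ (fun _ => ind_nonneg _)
          fun _ => ind_le_one _) (exclProd_nonneg ε Y)
    _ = ∑ q : Fin s × Fin (m + 1), ind (tdist (X q.1) (Y q.2) ≤ ε) * exclProd ε Y := by
        simp only [sum_mul, one_sub_ind, not_lt]
    _ ≤ _ := sum_le_sum fun q _ => mul_le_mul_of_nonneg_left
        (exclProd_le_exclProd_comp ε Y (Fin.strictMono_succAbove q.2)) (ind_nonneg _)

lemma integral_ind_tdist_le_mul_exclProd_le (hε : 0 ≤ ε) (x : Torus d) (j : Fin (m + 1)) :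
    ∫ Y : Fin (m + 1) → Torus d, ind (tdist x (Y j) ≤ ε) * exclProd ε (Y ∘ j.succAbove) ≤
      ε ^ d * ballVol d * Zpart d ε m := by
  rw [integral_mul_comp_succAbove j (fun y => ind (tdist x y ≤ ε)),
    integral_ind (p := fun y => tdist x y ≤ ε)
      (measurableSet_le (measurable_const.tdist measurable_id) measurable_const),
    ← Zpart_eq_integral_exclProd]
  exact mul_le_mul_of_nonneg_right (volume_real_tdist_le_le x hε)
    (integral_nonneg fun _ => exclProd_nonneg ε _)

lemma integrable_ind_tdist_le_mul_exclProd (x : Torus d) (j : Fin (m + 1)) :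
    Integrable fun Y : Fin (m + 1) → Torus d =>
      ind (tdist x (Y j) ≤ ε) * exclProd ε (Y ∘ j.succAbove) := by
  refine Integrable.of_bound (C := 1) (Measurable.aestronglyMeasurable ?_) (ae_of_all _ fun Y => ?_)
  · exact (measurable_ind (measurableSet_le (measurable_const.tdist (measurable_pi_apply j))
      measurable_const)).mul ((measurable_exclProd ε m).comp (measurable_pi_lambda _ fun _ =>
        measurable_pi_apply _))
  · rw [Real.norm_of_nonneg (mul_nonneg (ind_nonneg _) (exclProd_nonneg ε _))]
    exact mul_le_one₀ (ind_le_one _) (exclProd_nonneg ε _) (exclProd_le_one ε _)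

lemma integral_one_sub_prod_mul_exclProd_le (hε : 0 ≤ ε) (X : Fin s → Torus d) :
    ∫ Y : Fin (m + 1) → Torus d, (1 - ∏ i, ∏ j, ind (ε < tdist (X i) (Y j))) * exclProd ε Y ≤
      s * (m + 1) * (ε ^ d * ballVol d * Zpart d ε m) := by
  have hnonneg (Y : Fin (m + 1) → Torus d) :
      0 ≤ (1 - ∏ i, ∏ j, ind (ε < tdist (X i) (Y j))) * exclProd ε Y := by
    refine mul_nonneg (sub_nonneg.2 ?_) (exclProd_nonneg ε Y)
    exact prod_le_one (fun _ _ => prod_nonneg fun _ _ => ind_nonneg _)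
      fun _ _ => prod_le_one (fun _ _ => ind_nonneg _) fun _ _ => ind_le_one _
  have hint (q : Fin s × Fin (m + 1)) := integrable_ind_tdist_le_mul_exclProd (ε := ε) (X q.1) q.2
  calc _ ≤ ∫ Y : Fin (m + 1) → Torus d, ∑ q : Fin s × Fin (m + 1),
          ind (tdist (X q.1) (Y q.2) ≤ ε) * exclProd ε (Y ∘ q.2.succAbove) :=
        integral_mono_of_nonneg (ae_of_all _ hnonneg) (integrable_finsetSum _ fun q _ => hint q)
          (ae_of_all _ (one_sub_prod_mul_exclProd_le X))
    _ = ∑ q : Fin s × Fin (m + 1), ∫ Y : Fin (m + 1) → Torus d,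
          ind (tdist (X q.1) (Y q.2) ≤ ε) * exclProd ε (Y ∘ q.2.succAbove) :=
        integral_finsetSum _ fun q _ => hint q
    _ ≤ ∑ _q : Fin s × Fin (m + 1), ε ^ d * ballVol d * Zpart d ε m :=
        sum_le_sum fun q _ => integral_ind_tdist_le_mul_exclProd_le hε (X q.1) q.2
    _ = _ := by simp

end Bound

theorem Zflat_upper_bound_general
    (d : ℕ) (ε : ℝ) (hε0 : 0 < ε)
    (s N : ℕ) (hsN : s < N) (X : Fin s → Torus d) :
    Zflat d ε hsN.le X ≤
      (s : ℝ) * ((N - s : ℕ) : ℝ) * ε ^ d * ballVol d * Zpart d ε (N - s - 1) := by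
  obtain ⟨m, hm⟩ : ∃ m, N - s = m + 1 := ⟨N - s - 1, by omega⟩
  have hm' : N - s - 1 = m := by omega
  unfold Zflat
  rw [hm', hm]
  refine (integral_one_sub_prod_mul_exclProd_le hε0.le X).trans_eq ?_
  push_cast
  ring

/-- The bound `𝒵♭_{(s+1,N)}(X_s) ≤ s (N-s) ε^d κ_d 𝒵_{N-s-1}`. -/
theorem Zflat_upper_bound
    (d : ℕ) (hd : 2 ≤ d) (ε : ℝ) (hε0 : 0 < ε) (hε : ε < 1/2)
    (s N : ℕ) (hs : 1 ≤ s) (hsN : s < N) (X : Fin s → Torus d) :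
    Zflat d ε hsN.le X ≤
      (s : ℝ) * ((N - s : ℕ) : ℝ) * ε ^ d * ballVol d * Zpart d ε (N - s - 1) :=
  Zflat_upper_bound_general d ε hε0 s N hsN X
end
end

section
/- Let d ≥ 2, β > 0, and let ρ⁰ : 𝕋^d → ℝ be a continuous probability density. Define the perturbed initial data f_N^0(Z_N) := M_{N,β}(Z_N) ρ⁰(x₁) and its marginals f_N^{0(s)}(Z_s) := ∫ f_N^0(Z_N) dz_{s+1}…dz_N = ρ⁰(x₁) M_{N,β}^{(s)}(Z_s), and set g^{0(s)}(Z_s) := ρ⁰(x₁) M_β^{⊗s}(V_s). There is a constant C > 0 depending only on d such that for all integers 1 ≤ s ≤ N and all ε ∈ (0, 1/2), setting α := N ε^{d−1} and assuming ε α κ_d ≤ 1/2, one has the pointwise bound | ( f_N^{0(s)} − g^{0(s)} ) 1_{𝒟_ε^s} | ≤ C^s ε α M_β^{⊗s} ‖ρ⁰‖_{L^∞} on (𝕋^d × ℝ^d)^s. -/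
open MeasureTheory Real

noncomputable section

/-!
Integrating out the particles `s+1, …, N`, the marginal is
`𝒵_N⁻¹ 1_{𝒟_ε^s}(X_s) Φ(X_s) M_β^{⊗s}(V_s)`, where `Φ(X_s)` (`Zavoid`) is the partition
function of `N - s` hard spheres that must also avoid `X_s`. Each single constraint
`d(x, y_j) > ε` removes at most the fraction `a = ε^d κ_d` of the configurations, so a union bound
gives `(1 - s N a) 𝒵_{N-s} ≤ Φ ≤ 𝒵_{N-s}`. Integrating over `X_s` with `s = 1` gives
`𝒵_{k+1} ≥ (1 - k a) 𝒵_k`, hence `(1 - N a)^s 𝒵_{N-s} ≤ 𝒵_N ≤ 𝒵_s 𝒵_{N-s} ≤ 𝒵_{N-s}`.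
Since `N a = ε α κ_d ≤ 1/2`, the ratio `Φ / 𝒵_N` is within `s 2^s ε α κ_d` of `1`.
-/

namespace HardSpheres

instance : IsProbabilityMeasure (volume : Measure (AddCircle (1 : ℝ))) := ⟨by simp⟩

variable {d : ℕ}

-- Instance search does not find this through the nested product `Fin m → Torus d`.
instance : (volume : Measure (Torus d)).IsAddHaarMeasure := inferInstance

section Indicator

lemma ind_nonneg (P : Prop) : 0 ≤ ind P := by unfold ind; split <;> norm_num

lemma ind_le_one (P : Prop) : ind P ≤ 1 := by unfold ind; split <;> norm_num

lemma abs_ind_le_one (P : Prop) : |ind P| ≤ 1 := by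
  rw [abs_of_nonneg (ind_nonneg P)]; exact ind_le_one P

lemma ind_of {P : Prop} (h : P) : ind P = 1 := if_pos h

lemma ind_of_not {P : Prop} (h : ¬ P) : ind P = 0 := if_neg h

lemma ind_and (P Q : Prop) : ind (P ∧ Q) = ind P * ind Q := by
  by_cases hP : P <;> by_cases hQ : Q <;> simp [ind, hP, hQ]

lemma ind_mul_le_right (P : Prop) {a : ℝ} (ha : 0 ≤ a) : ind P * a ≤ a :=
  mul_le_of_le_one_left ha (ind_le_one P)

lemma abs_ind_mul_ind_le_one (P Q : Prop) : |ind P * ind Q| ≤ 1 := by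
  rw [← ind_and]; exact abs_ind_le_one _

lemma prod_ind {ι : Type*} (F : Finset ι) (P : ι → Prop) :
    ∏ i ∈ F, ind (P i) = ind (∀ i ∈ F, P i) := by
  by_cases h : ∀ i ∈ F, P i
  · rw [ind_of h]; exact Finset.prod_eq_one fun i hi => ind_of (h i hi)
  · obtain ⟨i, hi, hPi⟩ : ∃ i ∈ F, ¬ P i := by simpa using h
    rw [ind_of_not h]; exact Finset.prod_eq_zero hi (ind_of_not hPi)

lemma one_sub_sum_ind_not_le_ind_forall {ι : Type*} [Fintype ι] (P : ι → Prop) :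
    1 - ∑ i, ind (¬ P i) ≤ ind (∀ i, P i) := by
  by_cases h : ∀ i, P i
  · rw [ind_of h]
    linarith [Finset.sum_nonneg fun i (_ : i ∈ Finset.univ) => ind_nonneg (¬ P i)]
  · obtain ⟨i, hi⟩ := not_forall.mp h
    have := Finset.single_le_sum (fun j _ => ind_nonneg (¬ P j)) (Finset.mem_univ i)
    rw [ind_of hi] at this
    linarith [ind_nonneg (∀ i, P i)]

@[fun_prop]
lemma measurable_ind {γ : Type*} [MeasurableSpace γ] {P : γ → Prop} (h : Measurable P) :
    Measurable fun t => ind (P t) := by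
  classical
  convert (measurable_const (a := (1 : ℝ))).indicator h.setOf using 1
  ext t
  by_cases ht : P t <;> simp [ind, ht]

lemma integrable_of_abs_le_one {γ : Type*} [MeasurableSpace γ] {μ : Measure γ}
    [IsFiniteMeasure μ] {f : γ → ℝ} (hm : Measurable f) (h : ∀ x, |f x| ≤ 1) :
    Integrable f μ :=
  .of_bound hm.aestronglyMeasurable 1 (ae_of_all _ h)

end Indicator

section TorusDistance

lemma tdist_comm (x y : Torus d) : tdist x y = tdist y x := by
  simp [tdist, dist_comm]

lemma tdist_add_left (c x y : Torus d) : tdist (c + x) (c + y) = tdist x y := by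
  simp [tdist]

lemma continuous_tdist : Continuous fun p : Torus d × Torus d => tdist p.1 p.2 := by
  unfold tdist
  refine Real.continuous_sqrt.comp (continuous_finsetSum _ fun i _ => ?_)
  exact (((continuous_apply i).comp continuous_fst).dist
    ((continuous_apply i).comp continuous_snd)).pow 2

@[fun_prop]
lemma measurable_tdist : Measurable fun p : Torus d × Torus d => tdist p.1 p.2 :=
  continuous_tdist.measurable

lemma ballVol_nonneg (d : ℕ) : 0 ≤ ballVol d := ENNReal.toReal_nonneg

lemma measurePreserving_add_coe_Ioc (x : Torus d) :
    MeasurePreserving (fun t : Fin d → ℝ => x + fun i => (t i : AddCircle (1 : ℝ)))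
      (volume.restrict (Set.univ.pi fun _ => Set.Ioc (-(1 / 2)) (1 / 2))) volume := by
  have hmk : MeasurePreserving ((↑) : ℝ → AddCircle (1 : ℝ))
      (volume.restrict (Set.Ioc (-(1 / 2)) (1 / 2))) volume := by
    have h := AddCircle.measurePreserving_mk 1 (-(1 / 2))
    rwa [show -(1 / 2 : ℝ) + 1 = 1 / 2 by norm_num] at h
  rw [volume_pi, Measure.restrict_pi_pi]
  exact (measurePreserving_add_left _ x).comp (measurePreserving_pi _ _ fun _ => hmk)

/-- On the fundamental box `(-1/2, 1/2]^d` the torus distance is the Euclidean one. -/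
lemma volume_tdist_le_le (ε : ℝ) (x : Torus d) :
    volume {y : Torus d | tdist x y ≤ ε} ≤ volume (Metric.closedBall (0 : Vel d) ε) := by
  have hS : MeasurableSet {y : Torus d | tdist x y ≤ ε} :=
    measurableSet_le (by fun_prop) measurable_const
  have hQ := measurePreserving_add_coe_Ioc x
  rw [← hQ.measure_preimage hS.nullMeasurableSet, Measure.restrict_apply (hQ.measurable hS),
    ← (PiLp.volume_preserving_toLp (Fin d)).measure_preimage
      measurableSet_closedBall.nullMeasurableSet]
  refine measure_mono fun t ⟨htS, htI⟩ => ?_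
  have habs : ∀ i, ‖(t i : AddCircle (1 : ℝ))‖ = |t i| := fun i =>
    (AddCircle.norm_coe_eq_abs_iff (p := 1) one_ne_zero).2 <| by
      have := htI i (Set.mem_univ i)
      rw [abs_one, abs_le]; constructor <;> linarith [this.1, this.2]
  simp only [Set.mem_preimage, Set.mem_ofPred_eq, tdist, Pi.add_apply, dist_self_add_right,
    habs, sq_abs] at htS
  simpa [EuclideanSpace.norm_eq, Real.norm_eq_abs, sq_abs] using htS

lemma integral_ind_tdist_le {ε : ℝ} (hε : 0 ≤ ε) (x : Torus d) :
    ∫ y : Torus d, ind (tdist x y ≤ ε) ≤ ε ^ d * ballVol d := by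
  classical
  have hS : MeasurableSet {y : Torus d | tdist x y ≤ ε} :=
    measurableSet_le (by fun_prop) measurable_const
  have hind : (fun y : Torus d => ind (tdist x y ≤ ε)) = {y | tdist x y ≤ ε}.indicator 1 := by
    ext y; by_cases h : tdist x y ≤ ε <;> simp [ind, h]
  have hball : volume (Metric.closedBall (0 : Vel d) ε)
      = ENNReal.ofReal (ε ^ d) * volume (Metric.ball (0 : Vel d) 1) := by
    rw [Measure.addHaar_closedBall _ _ hε, finrank_euclideanSpace_fin]
  rw [hind, integral_indicator_one hS, ballVol, ← ENNReal.toReal_ofReal (pow_nonneg hε d),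
    ← ENNReal.toReal_mul, ← hball]
  exact ENNReal.toReal_mono measure_closedBall_lt_top.ne (volume_tdist_le_le ε x)

end TorusDistance

section Exclusion

variable {s : ℕ} (ε : ℝ)

lemma exclInd_eq_prod (X : Fin s → Torus d) :
    exclInd d ε X = ∏ p ∈ Finset.univ.filter (fun p : Fin s × Fin s => p.1 < p.2),
      ind (ε < tdist (X p.1) (X p.2)) := by
  rw [prod_ind, exclInd]
  congr 1
  refine propext ⟨fun H p hp => H _ _ (Finset.mem_filter.mp hp).2.ne, fun H i j hij => ?_⟩
  rcases hij.lt_or_gt with hlt | hgt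
  · exact H (i, j) (by simpa using hlt)
  · rw [tdist_comm]; exact H (j, i) (by simpa using hgt)

@[fun_prop]
lemma measurable_exclInd {γ : Type*} [MeasurableSpace γ] {f : γ → Fin s → Torus d}
    (hf : Measurable f) : Measurable fun t => exclInd d ε (f t) :=
  (measurable_ind (by fun_prop) : Measurable fun X : Fin s → Torus d => exclInd d ε X).comp hf

lemma integrable_exclInd : Integrable fun X : Fin s → Torus d => exclInd d ε X :=
  integrable_of_abs_le_one (by fun_prop) fun _ => abs_ind_le_one _

lemma exclInd_const_add (c : Torus d) (X : Fin s → Torus d) :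
    exclInd d ε ((fun _ => c) + X) = exclInd d ε X := by
  simp only [exclInd, Pi.add_apply, tdist_add_left]

lemma exclInd_of_le_one (hs : s ≤ 1) (X : Fin s → Torus d) : exclInd d ε X = 1 :=
  ind_of fun i j hij => absurd (Fin.ext (by omega)) hij

end Exclusion

section Extend

variable {s N : ℕ}

def extendEquiv (h : s ≤ N) : Fin s ⊕ Fin (N - s) ≃ Fin N :=
  finSumFinEquiv.trans (finCongr (Nat.add_sub_of_le h))

@[simp]
lemma extend_extendEquiv_inl {α : Type*} (h : s ≤ N) (a : Fin s → α) (b : Fin (N - s) → α)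
    (i : Fin s) : _root_.extend h a b (extendEquiv h (.inl i)) = a i := by
  simp [_root_.extend, extendEquiv]

@[simp]
lemma extend_extendEquiv_inr {α : Type*} (h : s ≤ N) (a : Fin s → α) (b : Fin (N - s) → α)
    (j : Fin (N - s)) : _root_.extend h a b (extendEquiv h (.inr j)) = b j := by
  simp [_root_.extend, extendEquiv]

lemma prod_extend {α : Type*} (h : s ≤ N) (a : Fin s → α) (b : Fin (N - s) → α)
    (f : α → ℝ) :
    ∏ i, f (_root_.extend h a b i) = (∏ i, f (a i)) * ∏ j, f (b j) := by
  rw [← (extendEquiv h).prod_comp, Fintype.prod_sum_type]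
  simp

lemma integral_extend {α : Type*} [MeasureSpace α] [SigmaFinite (volume : Measure α)]
    (h : s ≤ N) (F : (Fin N → α) → ℝ) :
    ∫ Z, F Z = ∫ p : (Fin s → α) × (Fin (N - s) → α), F (_root_.extend h p.1 p.2) := by
  let E := (MeasurableEquiv.sumPiEquivProdPi fun _ : Fin s ⊕ Fin (N - s) => α).symm.trans
    (MeasurableEquiv.piCongrLeft (fun _ => α) (extendEquiv h))
  have hE : MeasurePreserving E :=
    (volume_measurePreserving_piCongrLeft (fun _ => α) (extendEquiv h)).comp
      (volume_measurePreserving_sumPiEquivProdPi_symm fun _ : Fin s ⊕ Fin (N - s) => α)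
  have hE_apply : ∀ p, E p = _root_.extend h p.1 p.2 := by
    intro p
    ext i
    obtain ⟨k, rfl⟩ := (extendEquiv h).surjective i
    cases k <;> simp [E, MeasurableEquiv.piCongrLeft] <;> rfl
  simp only [← hE.integral_comp' F, hE_apply]

lemma exclInd_extend (ε : ℝ) (h : s ≤ N) (X : Fin s → Torus d)
    (Y : Fin (N - s) → Torus d) :
    exclInd d ε (_root_.extend h X Y) =
      exclInd d ε X * (ind (∀ i j, ε < tdist (X i) (Y j)) * exclInd d ε Y) := by
  simp only [exclInd, ← ind_and]
  congr 1
  apply propext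
  simp only [← (extendEquiv h).forall_congr_right, Sum.forall, extend_extendEquiv_inl,
    extend_extendEquiv_inr, ne_eq, EmbeddingLike.apply_eq_iff_eq, Sum.inl.injEq, Sum.inr.injEq,
    reduceCtorEq, not_false_eq_true, forall_const, forall_and]
  rw [forall_comm (α := Fin (N - s))]
  simp only [tdist_comm (Y _) (X _)]
  tauto

end Extend

section Partition

variable (d) (ε : ℝ)

lemma Zpart_eq_integral (k : ℕ) : Zpart d ε k = ∫ X : Fin k → Torus d, exclInd d ε X := by
  simp only [Zpart, exclInd_eq_prod]

lemma Zpart_nonneg (k : ℕ) : 0 ≤ Zpart d ε k := by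
  rw [Zpart_eq_integral]; exact integral_nonneg fun X => ind_nonneg _

lemma Zpart_le_one (k : ℕ) : Zpart d ε k ≤ 1 := by
  rw [Zpart_eq_integral]
  calc ∫ X : Fin k → Torus d, exclInd d ε X ≤ ∫ _ : Fin k → Torus d, (1 : ℝ) :=
        integral_mono (integrable_exclInd ε) (integrable_const 1) fun X => ind_le_one _
    _ = 1 := by simp

lemma Zpart_of_le_one {k : ℕ} (hk : k ≤ 1) : Zpart d ε k = 1 := by
  simp [Zpart_eq_integral, exclInd_of_le_one ε hk]

/-- The partition function of `m` hard spheres that must also avoid the centres `X`; for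
`m = N - s` it is `𝒵_{N-s} - 𝒵♭_{(s+1,N)}(X)`, cf. `Zflat`. -/
def Zavoid (m : ℕ) {s : ℕ} (X : Fin s → Torus d) : ℝ :=
  ∫ Y : Fin m → Torus d, ind (∀ i j, ε < tdist (X i) (Y j)) * exclInd d ε Y

end Partition

section Avoidance

variable {ε : ℝ} {s m : ℕ}

/-- Averaging over a common translation `c` of all of `Y`, which leaves `exclInd` invariant,
turns the constraint `tdist x (Y j) ≤ ε` into a ball of volume `ε ^ d * ballVol d` in `c`. -/
lemma integral_ind_tdist_le_mul_exclInd_le (hε : 0 ≤ ε) (x : Torus d) (j : Fin m) :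
    ∫ Y : Fin m → Torus d, ind (tdist x (Y j) ≤ ε) * exclInd d ε Y
      ≤ ε ^ d * ballVol d * Zpart d ε m := by
  set G : Torus d → (Fin m → Torus d) → ℝ :=
    fun c Y => ind (tdist x (c + Y j) ≤ ε) * exclInd d ε Y
  have hshift : ∀ c, ∫ Y : Fin m → Torus d, ind (tdist x (Y j) ≤ ε) * exclInd d ε Y
      = ∫ Y, G c Y := fun c => by
    rw [← integral_add_left_eq_self _ (fun _ => c)]
    simp only [G, Pi.add_apply, exclInd_const_add]
  have hG : Integrable (Function.uncurry G) (volume.prod volume) :=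
    integrable_of_abs_le_one (by fun_prop) fun _ => abs_ind_mul_ind_le_one _ _
  have hball : ∀ Y : Fin m → Torus d, ∫ c, G c Y ≤ ε ^ d * ballVol d * exclInd d ε Y := by
    intro Y
    simp only [G, integral_mul_const]
    refine mul_le_mul_of_nonneg_right ?_ (ind_nonneg _)
    simp_rw [add_comm _ (Y j)]
    rw [integral_add_left_eq_self (fun c => ind (tdist x c ≤ ε)) (Y j)]
    exact integral_ind_tdist_le hε x
  calc ∫ Y : Fin m → Torus d, ind (tdist x (Y j) ≤ ε) * exclInd d ε Y
      = ∫ c : Torus d, ∫ Y, G c Y := by simp [← hshift]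
    _ = ∫ Y, ∫ c, G c Y := integral_integral_swap hG
    _ ≤ ∫ Y : Fin m → Torus d, ε ^ d * ballVol d * exclInd d ε Y :=
        integral_mono hG.integral_prod_right
          ((integrable_of_abs_le_one (by fun_prop) fun _ => abs_ind_le_one _).const_mul _) hball
    _ = ε ^ d * ballVol d * Zpart d ε m := by rw [integral_const_mul, Zpart_eq_integral]

lemma integrable_Zavoid_integrand (X : Fin s → Torus d) :
    Integrable fun Y : Fin m → Torus d =>
      ind (∀ i j, ε < tdist (X i) (Y j)) * exclInd d ε Y :=
  integrable_of_abs_le_one (by fun_prop) fun _ => abs_ind_mul_ind_le_one _ _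

lemma integrable_Zavoid : Integrable fun X : Fin s → Torus d => Zavoid d ε m X := by
  have h : Integrable (fun p : (Fin s → Torus d) × (Fin m → Torus d) =>
      ind (∀ i j, ε < tdist (p.1 i) (p.2 j)) * exclInd d ε p.2) (volume.prod volume) :=
    integrable_of_abs_le_one (by fun_prop) fun _ => abs_ind_mul_ind_le_one _ _
  exact h.integral_prod_left

lemma Zavoid_nonneg (X : Fin s → Torus d) : 0 ≤ Zavoid d ε m X :=
  integral_nonneg fun _ => mul_nonneg (ind_nonneg _) (ind_nonneg _)

lemma Zavoid_le_Zpart (X : Fin s → Torus d) : Zavoid d ε m X ≤ Zpart d ε m := by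
  rw [Zpart_eq_integral]
  exact integral_mono (integrable_Zavoid_integrand X) (integrable_exclInd ε)
    fun _ => ind_mul_le_right _ (ind_nonneg _)

lemma one_sub_mul_Zpart_le_Zavoid (hε : 0 ≤ ε) (X : Fin s → Torus d) :
    (1 - s * m * (ε ^ d * ballVol d)) * Zpart d ε m ≤ Zavoid d ε m X := by
  set F : Fin s × Fin m → (Fin m → Torus d) → ℝ :=
    fun p Y => ind (tdist (X p.1) (Y p.2) ≤ ε) * exclInd d ε Y
  have hF : ∀ p, Integrable (F p) := fun p =>
    integrable_of_abs_le_one (by fun_prop) fun _ => abs_ind_mul_ind_le_one _ _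
  have hunion : ∀ Y, exclInd d ε Y - ∑ p, F p Y
      ≤ ind (∀ i j, ε < tdist (X i) (Y j)) * exclInd d ε Y := by
    intro Y
    have h := one_sub_sum_ind_not_le_ind_forall fun p : Fin s × Fin m => ε < tdist (X p.1) (Y p.2)
    simp only [not_lt, Prod.forall] at h
    calc exclInd d ε Y - ∑ p, F p Y
        = (1 - ∑ p : Fin s × Fin m, ind (tdist (X p.1) (Y p.2) ≤ ε)) * exclInd d ε Y := by
          simp only [F, sub_mul, one_mul, Finset.sum_mul]
      _ ≤ _ := mul_le_mul_of_nonneg_right h (ind_nonneg _)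
  calc (1 - s * m * (ε ^ d * ballVol d)) * Zpart d ε m
      = Zpart d ε m - ∑ _p : Fin s × Fin m, ε ^ d * ballVol d * Zpart d ε m := by
        simp only [Finset.sum_const, Finset.card_univ, Fintype.card_prod, Fintype.card_fin,
          nsmul_eq_mul, Nat.cast_mul]
        ring
    _ ≤ Zpart d ε m - ∑ p, ∫ Y, F p Y := by
        gcongr with p
        exact integral_ind_tdist_le_mul_exclInd_le hε _ _
    _ = ∫ Y, (exclInd d ε Y - ∑ p, F p Y) := by
        rw [integral_sub (integrable_exclInd ε) (integrable_finsetSum _ fun p _ => hF p),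
          integral_finsetSum _ fun p _ => hF p, Zpart_eq_integral]
    _ ≤ Zavoid d ε m X := integral_mono
        ((integrable_exclInd ε).sub (integrable_finsetSum _ fun p _ => hF p))
        (integrable_Zavoid_integrand X) hunion

end Avoidance

section PartitionBounds

variable {ε : ℝ}

lemma Zpart_eq_integral_exclInd_mul_Zavoid {s N : ℕ} (h : s ≤ N) :
    Zpart d ε N = ∫ X : Fin s → Torus d, exclInd d ε X * Zavoid d ε (N - s) X := by
  have hint : Integrable (fun p : (Fin s → Torus d) × (Fin (N - s) → Torus d) =>
      exclInd d ε (_root_.extend h p.1 p.2)) (volume.prod volume) :=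
    integrable_of_abs_le_one (by simp only [exclInd_extend]; fun_prop) fun _ => abs_ind_le_one _
  rw [Zpart_eq_integral, integral_extend h, Measure.volume_eq_prod, integral_prod _ hint]
  simp only [exclInd_extend, Zavoid, integral_const_mul]

lemma Zpart_le_Zpart_sub {s N : ℕ} (h : s ≤ N) : Zpart d ε N ≤ Zpart d ε (N - s) := by
  rw [Zpart_eq_integral_exclInd_mul_Zavoid h]
  calc ∫ X : Fin s → Torus d, exclInd d ε X * Zavoid d ε (N - s) X
      ≤ ∫ X : Fin s → Torus d, exclInd d ε X * Zpart d ε (N - s) := by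
        refine integral_mono_of_nonneg (ae_of_all _ fun X => ?_)
          ((integrable_exclInd ε).mul_const _) (ae_of_all _ fun X => ?_)
        · exact mul_nonneg (ind_nonneg _) (Zavoid_nonneg X)
        · exact mul_le_mul_of_nonneg_left (Zavoid_le_Zpart X) (ind_nonneg _)
    _ = Zpart d ε s * Zpart d ε (N - s) := by rw [integral_mul_const, Zpart_eq_integral d ε s]
    _ ≤ Zpart d ε (N - s) := mul_le_of_le_one_left (Zpart_nonneg d ε _) (Zpart_le_one d ε s)

lemma one_sub_mul_Zpart_le_Zpart_succ (hε : 0 ≤ ε) (k : ℕ) :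
    (1 - k * (ε ^ d * ballVol d)) * Zpart d ε k ≤ Zpart d ε (k + 1) := by
  have hsplit := Zpart_eq_integral_exclInd_mul_Zavoid (d := d) (ε := ε) (Nat.le_add_left 1 k)
  simp only [exclInd_of_le_one ε le_rfl, one_mul, Nat.add_sub_cancel] at hsplit
  rw [hsplit]
  calc (1 - k * (ε ^ d * ballVol d)) * Zpart d ε k
      = ∫ _ : Fin 1 → Torus d, (1 - (1 : ℕ) * k * (ε ^ d * ballVol d)) * Zpart d ε k := by
        simp
    _ ≤ ∫ X : Fin 1 → Torus d, Zavoid d ε k X :=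
        integral_mono (integrable_const _) integrable_Zavoid fun X =>
          one_sub_mul_Zpart_le_Zavoid hε X

lemma one_sub_pow_mul_Zpart_le (hε : 0 ≤ ε) {N : ℕ} (hN : N * (ε ^ d * ballVol d) ≤ 1)
    (m : ℕ) {t : ℕ} (ht : m + t ≤ N) :
    (1 - N * (ε ^ d * ballVol d)) ^ t * Zpart d ε m ≤ Zpart d ε (m + t) := by
  induction t with
  | zero => simp
  | succ t ih =>
    have hmt : ((m + t : ℕ) : ℝ) * (ε ^ d * ballVol d) ≤ N * (ε ^ d * ballVol d) := by
      gcongr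
      · exact mul_nonneg (pow_nonneg hε d) (ballVol_nonneg d)
      · omega
    calc (1 - N * (ε ^ d * ballVol d)) ^ (t + 1) * Zpart d ε m
        = (1 - N * (ε ^ d * ballVol d)) * ((1 - N * (ε ^ d * ballVol d)) ^ t * Zpart d ε m) := by
          ring
      _ ≤ (1 - N * (ε ^ d * ballVol d)) * Zpart d ε (m + t) :=
          mul_le_mul_of_nonneg_left (ih (by omega)) (by linarith)
      _ ≤ (1 - ((m + t : ℕ) : ℝ) * (ε ^ d * ballVol d)) * Zpart d ε (m + t) :=
          mul_le_mul_of_nonneg_right (by linarith) (Zpart_nonneg d ε _)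
      _ ≤ Zpart d ε (m + (t + 1)) := one_sub_mul_Zpart_le_Zpart_succ hε (m + t)

lemma Zpart_pos (hε : 0 ≤ ε) {N : ℕ} (hN : N * (ε ^ d * ballVol d) < 1) :
    0 < Zpart d ε N := by
  have h := one_sub_pow_mul_Zpart_le hε hN.le 0 (le_of_eq (zero_add N))
  rw [Zpart_of_le_one d ε zero_le_one, mul_one, zero_add] at h
  exact (pow_pos (by linarith) N).trans_le h

end PartitionBounds

section Maxwellian

variable {β : ℝ}

lemma maxwellian_nonneg (hβ : 0 ≤ β) (v : Vel d) : 0 ≤ Maxwellian d β v := by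
  have := Real.pi_pos
  unfold Maxwellian
  positivity

lemma integral_maxwellian (hβ : 0 < β) : ∫ v : Vel d, Maxwellian d β v = 1 := by
  have h2 : (0 : ℝ) < β / 2 := by linarith
  have hg := GaussianFourier.integral_rexp_neg_mul_sq_norm (V := Vel d) h2
  rw [finrank_euclideanSpace_fin] at hg
  simp only [Maxwellian]
  rw [integral_const_mul, hg, ← Real.mul_rpow (by positivity) (by positivity),
    show β / (2 * π) * (π / (β / 2)) = 1 by field_simp, Real.one_rpow]

lemma integral_prod_maxwellian (hβ : 0 < β) (m : ℕ) :
    ∫ W : Fin m → Vel d, ∏ j, Maxwellian d β (W j) = 1 := by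
  rw [integral_fintype_prod_volume_eq_pow, integral_maxwellian hβ, one_pow]

lemma gibbsMarginal_eq (hβ : 0 < β) (ε : ℝ) {s N : ℕ} (h : s ≤ N)
    (X : Fin s → Torus d) (V : Fin s → Vel d) :
    gibbsMarginal d β ε h X V =
      (Zpart d ε N)⁻¹ * exclInd d ε X * Zavoid d ε (N - s) X *
        ∏ i, Maxwellian d β (V i) := by
  set c := (Zpart d ε N)⁻¹ * exclInd d ε X * ∏ i, Maxwellian d β (V i)
  set f : (Fin (N - s) → Torus d) → ℝ :=
    fun Y => c * (ind (∀ i j, ε < tdist (X i) (Y j)) * exclInd d ε Y)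
  set g : (Fin (N - s) → Vel d) → ℝ := fun W => ∏ j, Maxwellian d β (W j)
  have hsplit : ∀ p : (Fin (N - s) → Torus d) × (Fin (N - s) → Vel d),
      gibbs d β ε N (_root_.extend h X p.1) (_root_.extend h V p.2) = f p.1 * g p.2 := by
    intro p
    simp only [f, g, c, gibbs, exclInd_extend, prod_extend]
    ring
  rw [gibbsMarginal, integral_congr_ae (ae_of_all _ hsplit), Measure.volume_eq_prod,
    integral_prod_mul f g, integral_prod_maxwellian hβ, integral_const_mul, Zavoid]
  ring

end Maxwellian

lemma abs_div_sub_one_le {Φ Z Zm A : ℝ} {s : ℕ} (hA0 : 0 ≤ A) (hA : A ≤ 1 / 2) (hZ : 0 < Z)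
    (hZle : Z ≤ Zm) (hZge : (1 - A) ^ s * Zm ≤ Z)
    (hΦ0 : 0 ≤ Φ) (hΦle : Φ ≤ Zm) (hΦge : (1 - s * A) * Zm ≤ Φ) :
    |Φ / Z - 1| ≤ s * 2 ^ s * A := by
  have hbern : 1 - s * A ≤ (1 - A) ^ s := by
    simpa [sub_eq_add_neg] using one_add_mul_le_pow (by linarith : (-2 : ℝ) ≤ -A) s
  have h2u : 1 ≤ 2 ^ s * (1 - A) ^ s := by
    rw [← mul_pow]; exact one_le_pow₀ (by linarith)
  have hsA : 0 ≤ s * A := by positivity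
  have h2s : (1 : ℝ) ≤ 2 ^ s := one_le_pow₀ (by norm_num)
  have hZm : 0 ≤ Zm := hZ.le.trans hZle
  rw [abs_le]
  constructor
  · have hlow : 1 - s * A ≤ Φ / Z := by
      by_cases hc : 0 ≤ 1 - s * A
      · rw [le_div_iff₀ hZ]
        exact (mul_le_mul_of_nonneg_left hZle hc).trans hΦge
      · exact (lt_of_not_ge hc).le.trans (div_nonneg hΦ0 hZ.le)
    nlinarith
  · rw [div_sub_one hZ.ne', div_le_iff₀ hZ]
    nlinarith [mul_le_mul_of_nonneg_left hZge (by positivity : (0 : ℝ) ≤ s * A * 2 ^ s),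
      mul_le_mul_of_nonneg_right h2u (mul_nonneg hsA hZm)]

lemma nat_mul_two_pow_mul_le {κ : ℝ} (hκ : 0 ≤ κ) {s : ℕ} (hs : 1 ≤ s) :
    s * 2 ^ s * κ ≤ (4 * (κ + 1)) ^ s := by
  have hs2 : (s : ℝ) ≤ 2 ^ s := by exact_mod_cast (Nat.lt_two_pow_self).le
  have hκs : κ ≤ (κ + 1) ^ s :=
    (le_add_of_nonneg_right zero_le_one).trans (le_self_pow₀ (by linarith) (by omega))
  calc (s : ℝ) * 2 ^ s * κ ≤ 2 ^ s * 2 ^ s * (κ + 1) ^ s := by gcongr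
    _ = (4 * (κ + 1)) ^ s := by rw [mul_pow, ← mul_pow]; norm_num

lemma abs_Zavoid_div_Zpart_sub_one_le {ε : ℝ} (hε : 0 ≤ ε) {s N : ℕ} (h : s ≤ N)
    (hN : N * (ε ^ d * ballVol d) ≤ 1 / 2) (X : Fin s → Torus d) :
    |Zavoid d ε (N - s) X / Zpart d ε N - 1| ≤ s * 2 ^ s * (N * (ε ^ d * ballVol d)) := by
  have ha : 0 ≤ ε ^ d * ballVol d := mul_nonneg (pow_nonneg hε d) (ballVol_nonneg d)
  have hZge := one_sub_pow_mul_Zpart_le hε (hN.trans (by norm_num)) (N - s) (le_of_eq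
    (Nat.sub_add_cancel h))
  rw [Nat.sub_add_cancel h] at hZge
  have hsm : (s : ℝ) * (N - s : ℕ) * (ε ^ d * ballVol d)
      ≤ s * (N * (ε ^ d * ballVol d)) := by
    rw [mul_assoc]; gcongr; omega
  refine abs_div_sub_one_le (by positivity) hN (Zpart_pos hε (by linarith))
    (Zpart_le_Zpart_sub h) hZge (Zavoid_nonneg X) (Zavoid_le_Zpart X) ?_
  exact (mul_le_mul_of_nonneg_right (by linarith) (Zpart_nonneg d ε _)).trans
    (one_sub_mul_Zpart_le_Zavoid hε X)

lemma abs_gibbsMarginal_sub_mul_exclInd_le {β ε : ℝ} (hβ : 0 < β) (hε : 0 ≤ ε) {s N : ℕ}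
    (h : s ≤ N) (hN : N * (ε ^ d * ballVol d) ≤ 1 / 2) (X : Fin s → Torus d)
    (V : Fin s → Vel d) :
    |(gibbsMarginal d β ε h X V - ∏ i, Maxwellian d β (V i)) * exclInd d ε X| ≤
      s * 2 ^ s * (N * (ε ^ d * ballVol d)) * ∏ i, Maxwellian d β (V i) := by
  have hM : 0 ≤ ∏ i, Maxwellian d β (V i) :=
    Finset.prod_nonneg fun i _ => maxwellian_nonneg hβ.le (V i)
  rw [gibbsMarginal_eq hβ ε h X V]
  by_cases hX : ∀ i j : Fin s, i ≠ j → ε < tdist (X i) (X j)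
  · calc _ = |Zavoid d ε (N - s) X / Zpart d ε N - 1| * ∏ i, Maxwellian d β (V i) := by
          rw [exclInd, ind_of hX, ← abs_of_nonneg hM, ← abs_mul, abs_of_nonneg hM]
          congr 1; ring
      _ ≤ _ := mul_le_mul_of_nonneg_right (abs_Zavoid_div_Zpart_sub_one_le hε h hN X) hM
  · rw [exclInd, ind_of_not hX, mul_zero, abs_zero]
    have := ballVol_nonneg d
    exact mul_nonneg (by positivity) hM

end HardSpheres

open HardSpheres

/-- Asymptotic factorization of the perturbed initial data: for a continuous probability
density `ρ⁰` on the torus, with `f_N^{0(s)}(Z_s) = ρ⁰(x₁) M_{N,β}^{(s)}(Z_s)` and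
`g^{0(s)}(Z_s) = ρ⁰(x₁) M_β^{⊗s}(V_s)`, there is `C > 0` depending only on `d` such that,
in the scaling `α = N ε^{d-1}` with `ε α κ_d ≤ 1/2`,
`|(f_N^{0(s)} - g^{0(s)}) 1_{𝒟_ε^s}| ≤ C^s ε α M_β^{⊗s} ‖ρ⁰‖_{L^∞}` pointwise. -/
theorem initial_data_factorization
    (d : ℕ) (hd : 2 ≤ d) (β : ℝ) (hβ : 0 < β) :
    ∃ C > (0:ℝ), ∀ ρ : Torus d → ℝ, Continuous ρ → (∀ x, 0 ≤ ρ x) →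
      (∫ x : Torus d, ρ x) = 1 →
      ∀ s N : ℕ, ∀ hs : 1 ≤ s, ∀ hsN : s ≤ N,
      ∀ ε : ℝ, 0 < ε → ε < 1/2 → ∀ α : ℝ, α = N * ε ^ (d - 1) →
        ε * α * ballVol d ≤ 1/2 →
      ∀ (X : Fin s → Torus d) (V : Fin s → Vel d),
        |(ρ (X ⟨0, hs⟩) * gibbsMarginal d β ε hsN X V -
            ρ (X ⟨0, hs⟩) * ∏ i, Maxwellian d β (V i)) * exclInd d ε X| ≤
          C ^ s * ε * α * (∏ i, Maxwellian d β (V i)) * ⨆ x, |ρ x| := by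
  refine ⟨4 * (ballVol d + 1), by linarith [ballVol_nonneg d],
    fun ρ hρ _ _ s N hs hsN ε hε _ α hα hεα X V => ?_⟩
  subst hα
  have hA : ε * (N * ε ^ (d - 1)) * ballVol d = N * (ε ^ d * ballVol d) := by
    rw [← Nat.sub_add_cancel (by omega : 1 ≤ d), pow_succ, Nat.add_sub_cancel]; ring
  have hρ₀ : |ρ (X ⟨0, hs⟩)| ≤ ⨆ x, |ρ x| :=
    le_ciSup (isCompact_range hρ.abs).bddAbove _
  have hM : 0 ≤ ∏ i, Maxwellian d β (V i) :=
    Finset.prod_nonneg fun i _ => maxwellian_nonneg hβ.le (V i)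
  have hgibbs := abs_gibbsMarginal_sub_mul_exclInd_le hβ hε.le hsN (hA ▸ hεα) X V
  rw [← hA] at hgibbs
  calc _ = |ρ (X ⟨0, hs⟩)| *
        |(gibbsMarginal d β ε hsN X V - ∏ i, Maxwellian d β (V i)) * exclInd d ε X| := by
        rw [← abs_mul]; congr 1; ring
    _ ≤ (⨆ x, |ρ x|) * (s * 2 ^ s * ballVol d * (ε * (N * ε ^ (d - 1))) *
        ∏ i, Maxwellian d β (V i)) := by
        exact mul_le_mul hρ₀ (hgibbs.trans_eq (by ring)) (abs_nonneg _)
          ((abs_nonneg _).trans hρ₀)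
    _ = s * 2 ^ s * ballVol d * (ε * (N * ε ^ (d - 1)) * (∏ i, Maxwellian d β (V i)) *
        ⨆ x, |ρ x|) := by ring
    _ ≤ (4 * (ballVol d + 1)) ^ s * (ε * (N * ε ^ (d - 1)) * (∏ i, Maxwellian d β (V i)) *
        ⨆ x, |ρ x|) :=
        mul_le_mul_of_nonneg_right (nat_mul_two_pow_mul_le (ballVol_nonneg d) hs)
          (mul_nonneg (mul_nonneg (by positivity) hM) ((abs_nonneg _).trans hρ₀))
    _ = _ := by ring
end
end

section
/- Let d ≥ 2. There exists a constant C > 0 depending only on d with the following property. Let t > 0, E > 0, and let parameters satisfy 0 < ε ≤ ā, 6ā ≤ ε₀ ≤ 1. For any two points x₁⁰, x₂⁰ ∈ 𝕋^d with d(x₁⁰, x₂⁰) ≥ ε₀ and any velocity v₁ ∈ ℝ^d with |v₁| ≤ E, there exists a Lebesgue-measurable set K ⊂ ℝ^d with Lebesgue measure |K| ≤ C E^d ( (ā/ε₀)^{d−1} + (E t)^d ā^{d−1} ) such that: for every v₂ ∈ ℝ^d with |v₂| ≤ E and v₁ − v₂ ∉ K, and for all x₁, x₂ ∈ 𝕋^d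 with d(x₁, x₁⁰) ≤ ā and d(x₂, x₂⁰) ≤ ā, one has d(x₁ − u v₁, x₂ − u v₂) > ε for every u ∈ [0, t]. -/
open MeasureTheory Real

noncomputable section

/-- Projection `ℝ^d → (ℝ/ℤ)^d`. -/
noncomputable def toTorus {d : ℕ} (v : Vel d) : Torus d := fun i => (v i : AddCircle (1:ℝ))

/-- The (backward) free flow on the torus: `x - u v`. -/
noncomputable def flow {d : ℕ} (x : Torus d) (u : ℝ) (v : Vel d) : Torus d :=
  x - toTorus (u • v)

/-!
A near-collision at time `u ∈ [0, t]` puts `u (v₁ - v₂)` within `3ā` of a lattice translate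
`p - m` of a lift `p ∈ [-1/2, 1/2]^d` of `x₁⁰ - x₂⁰`. Since `|p - m| ≥ ε₀ ≥ 6ā`, this forces
`u > 0`, `|m|_∞ ≤ 2Et + 1`, and puts `v₁ - v₂` within `12āE / |p - m|` of the line `ℝ (p - m)`.
So `K` is a union of cylinders of length `4E` around these lines: `3^d` of radius `12āE / ε₀`
for `|m|_∞ ≤ 1`, and `O((Et + 1)^d)` of radius `12āE` for the others, which have `|p - m| ≥ 1`.
-/

open scoped ENNReal
open Module (finrank)

def intVec {d : ℕ} (m : Fin d → ℤ) : Vel d := WithLp.toLp 2 (fun i => (m i : ℝ))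

section TorusDistance

variable {d : ℕ}

@[simp] lemma intVec_apply (m : Fin d → ℤ) (i : Fin d) : intVec m i = m i := rfl

lemma toTorus_sub (a b : Vel d) : toTorus (a - b) = toTorus a - toTorus b := by
  funext i
  simp [toTorus]

lemma tdist_eq_norm (x y : Torus d) : tdist x y = ‖WithLp.toLp 2 (x - y)‖ := by
  simp [tdist, PiLp.norm_eq_of_L2, dist_eq_norm]

lemma norm_toLp_toTorus_le (a : Vel d) (m : Fin d → ℤ) :
    ‖WithLp.toLp 2 (toTorus a)‖ ≤ ‖a - intVec m‖ := by
  rw [PiLp.norm_eq_of_L2, EuclideanSpace.norm_eq]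
  gcongr with i
  simp only [toTorus, UnitAddCircle.norm_eq, PiLp.sub_apply, intVec_apply, Real.norm_eq_abs]
  exact round_le _ _

lemma exists_norm_sub_intVec_eq (a : Vel d) :
    ∃ m : Fin d → ℤ, ‖a - intVec m‖ = ‖WithLp.toLp 2 (toTorus a)‖ := by
  refine ⟨fun i => round (a i), ?_⟩
  simp [PiLp.norm_eq_of_L2, toTorus, UnitAddCircle.norm_eq]

lemma exists_toTorus_eq_of_abs_le_half (z : Torus d) :
    ∃ p : Vel d, toTorus p = z ∧ ∀ i, |p i| ≤ 1 / 2 := by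
  have h : ∀ i, ∃ r : ℝ, (r : AddCircle (1 : ℝ)) = z i ∧ |r| ≤ 1 / 2 := by
    intro i
    obtain ⟨s, hs⟩ := QuotientAddGroup.mk_surjective (z i)
    refine ⟨s - round s, ?_, abs_sub_round s⟩
    rw [← hs, AddCircle.coe_sub, sub_eq_self]
    simp
  choose p hp hb using h
  exact ⟨WithLp.toLp 2 p, funext hp, hb⟩

lemma exists_norm_sub_intVec_le_of_tdist_flow_le {x₁ x₂ y₁ y₂ : Torus d} {p v₁ v₂ : Vel d}
    {u r ε : ℝ} (hp : toTorus p = x₁ - x₂) (hy₁ : tdist y₁ x₁ ≤ r) (hy₂ : tdist y₂ x₂ ≤ r)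
    (hcol : tdist (flow y₁ u v₁) (flow y₂ u v₂) ≤ ε) :
    ∃ m, ‖p - u • (v₁ - v₂) - intVec m‖ ≤ 2 * r + ε := by
  obtain ⟨m, hm⟩ := exists_norm_sub_intVec_eq (p - u • (v₁ - v₂))
  have hsplit : toTorus (p - u • (v₁ - v₂))
      = (flow y₁ u v₁ - flow y₂ u v₂) - (y₁ - x₁) + (y₂ - x₂) := by
    simp only [toTorus_sub, smul_sub, hp, flow]
    abel
  rw [tdist_eq_norm] at hy₁ hy₂ hcol
  refine ⟨m, ?_⟩
  calc ‖p - u • (v₁ - v₂) - intVec m‖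
      ≤ ‖WithLp.toLp 2 (flow y₁ u v₁ - flow y₂ u v₂)‖ + ‖WithLp.toLp 2 (y₁ - x₁)‖
        + ‖WithLp.toLp 2 (y₂ - x₂)‖ := by
        rw [hm, hsplit, WithLp.toLp_add, WithLp.toLp_sub]
        exact norm_add_le_of_le (norm_sub_le _ _) le_rfl
    _ ≤ 2 * r + ε := by linarith

end TorusDistance

section Tube

variable {F : Type*} [NormedAddCommGroup F] [InnerProductSpace ℝ F]

def tube (q : F) (L ρ : ℝ) : Set F :=
  {w | ‖w‖ ≤ L ∧ ∀ f : F, inner ℝ f q = 0 → |inner ℝ f w| ≤ ρ * ‖f‖}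

lemma isClosed_tube (q : F) (L ρ : ℝ) : IsClosed (tube q L ρ) := by
  have h : tube q L ρ = {w | ‖w‖ ≤ L} ∩ ⋂ f : F, ⋂ (_ : inner ℝ f q = 0),
      {w | |inner ℝ f w| ≤ ρ * ‖f‖} := by
    ext w
    simp [tube]
  rw [h]
  exact (isClosed_le continuous_norm continuous_const).inter <|
    isClosed_iInter fun f => isClosed_iInter fun _ => isClosed_le (by fun_prop) continuous_const

lemma mem_tube_of_norm_smul_sub_le {q w : F} {L δ ρ r u : ℝ} (hw : ‖w‖ ≤ L) (hu : 0 < u)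
    (hclose : ‖u • w - q‖ ≤ δ) (hr : 0 < r) (hδr : 2 * δ ≤ r) (hrq : r ≤ ‖q‖)
    (hρ : 2 * δ * L ≤ ρ * r) : w ∈ tube q L ρ := by
  refine ⟨hw, fun f hf => ?_⟩
  have hinner : u * |inner ℝ f w| ≤ δ * ‖f‖ :=
    calc u * |inner ℝ f w| = |inner ℝ f (u • w - q)| := by
          rw [inner_sub_right, hf, sub_zero, inner_smul_right, abs_mul, abs_of_pos hu]
      _ ≤ ‖f‖ * ‖u • w - q‖ := abs_real_inner_le_norm _ _
      _ ≤ δ * ‖f‖ := by rw [mul_comm]; gcongr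
  have hlong : r ≤ 2 * u * L := by
    have h1 := norm_sub_norm_le q (u • w)
    rw [norm_sub_rev, norm_smul, Real.norm_of_nonneg hu.le] at h1
    nlinarith
  have hL : 0 ≤ L := (norm_nonneg w).trans hw
  refine le_of_mul_le_mul_left ?_ hr
  calc r * |inner ℝ f w| ≤ 2 * u * L * |inner ℝ f w| := by gcongr
    _ = 2 * L * (u * |inner ℝ f w|) := by ring
    _ ≤ 2 * L * (δ * ‖f‖) := by gcongr
    _ = 2 * δ * L * ‖f‖ := by ring
    _ ≤ r * (ρ * ‖f‖) := by rw [← mul_assoc, mul_comm r]; gcongr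

variable [FiniteDimensional ℝ F] [MeasurableSpace F] [BorelSpace F]

lemma volume_tube_le {q : F} (hq : q ≠ 0) {L ρ : ℝ} (hL : 0 ≤ L) (hρ : 0 ≤ ρ) :
    volume (tube q L ρ) ≤ ENNReal.ofReal (2 * L * (2 * ρ) ^ (finrank ℝ F - 1)) := by
  have : Nontrivial F := ⟨⟨q, 0, hq⟩⟩
  obtain ⟨n, hn⟩ := Nat.exists_eq_add_one.2 (Module.finrank_pos (R := ℝ) (M := F))
  set e : F := ‖q‖⁻¹ • q
  have he : ‖e‖ = 1 := norm_smul_inv_norm hq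
  have horth : Orthonormal ℝ (({0} : Set (Fin (n + 1))).domRestrict fun _ => e) :=
    ⟨fun _ => he, fun i j hij => absurd (Subsingleton.elim i j) hij⟩
  obtain ⟨b, hb⟩ := horth.exists_orthonormalBasis_extension_of_card_eq (by simp [hn])
  have hb0 : b 0 = e := hb 0 rfl
  have hbq : ∀ j : Fin n, inner ℝ (b j.succ) q = 0 := by
    intro j
    have : q = ‖q‖ • b 0 := by rw [hb0, smul_inv_smul₀ (norm_ne_zero_iff.2 hq)]
    rw [this, inner_smul_right, b.orthonormal.2 (Fin.succ_ne_zero j), mul_zero]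
  set c : Fin (n + 1) → ℝ := Fin.cons L fun _ => ρ
  have hsub : tube q L ρ ⊆ b.repr ⁻¹' (WithLp.ofLp ⁻¹' Set.Icc (-c) c) := by
    intro w ⟨hwL, hw⟩
    suffices ∀ i, |inner ℝ (b i) w| ≤ c i by
      simpa only [Set.mem_preimage, Set.mem_Icc, Pi.le_def, ← forall_and, Pi.neg_apply,
        ← abs_le, b.repr_apply_apply] using this
    refine Fin.cases ?_ fun j => ?_
    · calc |inner ℝ (b 0) w| ≤ ‖b 0‖ * ‖w‖ := abs_real_inner_le_norm _ _
        _ ≤ L := by rw [b.orthonormal.1, one_mul]; exact hwL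
    · simpa [c, b.orthonormal.1] using hw _ (hbq j)
  calc volume (tube q L ρ) ≤ volume (b.repr ⁻¹' (WithLp.ofLp ⁻¹' Set.Icc (-c) c)) :=
        measure_mono hsub
    _ = volume (Set.Icc (-c) c) := by
        rw [b.measurePreserving_repr.measure_preimage (measurableSet_Icc.preimage
          (PiLp.volume_preserving_ofLp _).measurable).nullMeasurableSet,
          (PiLp.volume_preserving_ofLp _).measure_preimage measurableSet_Icc.nullMeasurableSet]
    _ = ENNReal.ofReal (2 * L * (2 * ρ) ^ (finrank ℝ F - 1)) := by
        rw [Real.volume_Icc_pi, Fin.prod_univ_succ, hn, Nat.add_sub_cancel,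
          ENNReal.ofReal_mul (by positivity), ENNReal.ofReal_pow (by positivity)]
        simp [c, two_mul]

lemma volume_biUnion_tube_le {ι : Type*} (s : Finset ι)
    {q : ι → F} (hq : ∀ i ∈ s, q i ≠ 0) {L ρ : ℝ} (hL : 0 ≤ L) (hρ : 0 ≤ ρ) :
    volume (⋃ i ∈ s, tube (q i) L ρ)
      ≤ s.card * ENNReal.ofReal (2 * L * (2 * ρ) ^ (finrank ℝ F - 1)) :=
  calc volume (⋃ i ∈ s, tube (q i) L ρ) ≤ ∑ i ∈ s, volume (tube (q i) L ρ) :=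
        measure_biUnion_finset_le _ _
    _ ≤ s.card • ENNReal.ofReal (2 * L * (2 * ρ) ^ (finrank ℝ F - 1)) :=
        Finset.sum_le_card_nsmul _ _ _ fun i hi => volume_tube_le (hq i hi) hL hρ
    _ = _ := nsmul_eq_mul _ _

end Tube

lemma pow_le_ten_pow_mul {n : ℕ} {k s : ℝ} (hk : 0 ≤ k) (hs : 0 ≤ s) (hks : k ≤ 5 * (s + 1)) :
    k ^ n ≤ 10 ^ n * (s ^ n + 1) :=
  calc k ^ n ≤ (5 * (s + 1)) ^ n := by gcongr
    _ = 5 ^ n * (s + 1) ^ n := mul_pow _ _ _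
    _ ≤ 5 ^ n * (2 ^ (n - 1) * (s ^ n + 1 ^ n)) := by gcongr; exact add_pow_le hs zero_le_one n
    _ ≤ 5 ^ n * (2 ^ n * (s ^ n + 1)) := by
        rw [one_pow]; gcongr; exacts [one_le_two, Nat.sub_le n 1]
    _ = 10 ^ n * (s ^ n + 1) := by rw [← mul_assoc, ← mul_pow]; norm_num

lemma tube_volume_sum_le {d N : ℕ} (hd : 0 < d) {E t abar ε₀ : ℝ} (hE : 0 ≤ E) (ht : 0 ≤ t)
    (habar : 0 ≤ abar) (hε₀ : 0 < ε₀) (hε₀1 : ε₀ ≤ 1) (hN : (N : ℝ) ≤ 2 * E * t + 2) :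
    3 ^ d * (2 * (2 * E) * (2 * (12 * abar * E / ε₀)) ^ (d - 1))
      + (2 * N + 1) ^ d * (2 * (2 * E) * (2 * (12 * abar * E)) ^ (d - 1))
      ≤ 4 * 24 ^ (d - 1) * (3 ^ d + 10 ^ d) * E ^ d
        * ((abar / ε₀) ^ (d - 1) + (E * t) ^ d * abar ^ (d - 1)) := by
  obtain ⟨n, rfl⟩ := Nat.exists_eq_add_one.2 hd
  simp only [Nat.add_sub_cancel]
  set P := 4 * 24 ^ n * E ^ (n + 1)
  set X := (abar / ε₀) ^ n
  set Y := abar ^ n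
  set Z := (E * t) ^ (n + 1)
  have hnear : 2 * (2 * E) * (2 * (12 * abar * E / ε₀)) ^ n = P * X := by
    simp only [P, X]; ring
  have hfar : 2 * (2 * E) * (2 * (12 * abar * E)) ^ n = P * Y := by
    simp only [P, Y]; ring
  have hcount : ((2 * N + 1 : ℝ)) ^ (n + 1) ≤ 10 ^ (n + 1) * (Z + 1) :=
    pow_le_ten_pow_mul (by positivity) (by positivity) (by linarith [mul_nonneg hE ht])
  have hYX : Y ≤ X := pow_le_pow_left₀ habar (le_div_self habar hε₀ hε₀1) n
  have hP : 0 ≤ P := by positivity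
  have hY : 0 ≤ Y := by positivity
  have hZY : 0 ≤ Z * Y := by positivity
  rw [hnear, hfar]
  calc 3 ^ (n + 1) * (P * X) + (2 * N + 1) ^ (n + 1) * (P * Y)
      ≤ 3 ^ (n + 1) * (P * X) + 10 ^ (n + 1) * (Z + 1) * (P * Y) := by gcongr
    _ = P * (3 ^ (n + 1) * X + 10 ^ (n + 1) * Y + 10 ^ (n + 1) * (Z * Y)) := by ring
    _ ≤ P * ((3 ^ (n + 1) + 10 ^ (n + 1)) * (X + Z * Y)) := by
        have h10 : (10 : ℝ) ^ (n + 1) * Y ≤ 10 ^ (n + 1) * X := by gcongr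
        have h3 : 0 ≤ (3 : ℝ) ^ (n + 1) * (Z * Y) := by positivity
        gcongr
        linarith
    _ = _ := by ring

section CollisionSet

variable {d : ℕ}

def latticeBox (d N : ℕ) : Finset (Fin d → ℤ) :=
  Fintype.piFinset fun _ => Finset.Icc (-(N : ℤ)) N

lemma card_latticeBox (d N : ℕ) : (latticeBox d N).card = (2 * N + 1) ^ d := by
  simp only [latticeBox, Fintype.card_piFinset, Int.card_Icc, Finset.prod_const,
    Finset.card_univ, Fintype.card_fin]
  congr 1
  omega

lemma one_le_norm_sub_intVec {p : Vel d} (hp : ∀ i, |p i| ≤ 1 / 2) {m : Fin d → ℤ}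
    (hm : m ∉ latticeBox d 1) : 1 ≤ ‖p - intVec m‖ := by
  simp only [latticeBox, Fintype.mem_piFinset, Finset.mem_Icc, ← abs_le, not_forall,
    not_le] at hm
  obtain ⟨i, hi⟩ := hm
  have him : (2 : ℝ) ≤ |(m i : ℝ)| := by exact_mod_cast (show (2 : ℤ) ≤ |m i| by omega)
  calc 1 ≤ |(m i : ℝ)| - |p i| := by linarith [hp i]
    _ ≤ |p i - m i| := by rw [abs_sub_comm]; exact abs_sub_abs_le_abs_sub _ _
    _ ≤ ‖p - intVec m‖ := by simpa using PiLp.norm_apply_le (p - intVec m) i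

lemma mem_latticeBox_of_norm_sub_intVec_le {p w : Vel d} (hp : ∀ i, |p i| ≤ 1 / 2)
    {m : Fin d → ℤ} (hm : ‖p - w - intVec m‖ ≤ 1 / 2) {N : ℕ} (hN : ‖w‖ + 1 ≤ N) :
    m ∈ latticeBox d N := by
  simp only [latticeBox, Fintype.mem_piFinset, Finset.mem_Icc, ← abs_le]
  intro i
  have hmi : |p i - w i - m i| ≤ 1 / 2 := by
    simpa using (PiLp.norm_apply_le (p - w - intVec m) i).trans hm
  have hwi : |w i| ≤ ‖w‖ := by simpa using PiLp.norm_apply_le w i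
  have hpi := abs_le.1 (hp i)
  have : |(m i : ℝ)| ≤ N := by
    rw [abs_le] at hmi hwi ⊢
    constructor <;> linarith
  exact_mod_cast this

def collisionSet (p : Vel d) (L ρ₁ ρ₂ : ℝ) (N : ℕ) : Set (Vel d) :=
  (⋃ m ∈ latticeBox d 1, tube (p - intVec m) L ρ₁) ∪
    ⋃ m ∈ latticeBox d N \ latticeBox d 1, tube (p - intVec m) L ρ₂

lemma measurableSet_collisionSet (p : Vel d) (L ρ₁ ρ₂ : ℝ) (N : ℕ) :
    MeasurableSet (collisionSet p L ρ₁ ρ₂ N) :=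
  .union (Finset.measurableSet_biUnion _ fun _ _ => (isClosed_tube _ _ _).measurableSet)
    (Finset.measurableSet_biUnion _ fun _ _ => (isClosed_tube _ _ _).measurableSet)

lemma volume_collisionSet_le {p : Vel d} (hp : ∀ m, p - intVec m ≠ 0) {L ρ₁ ρ₂ : ℝ}
    (hL : 0 ≤ L) (hρ₁ : 0 ≤ ρ₁) (hρ₂ : 0 ≤ ρ₂) (N : ℕ) :
    volume (collisionSet p L ρ₁ ρ₂ N) ≤ ENNReal.ofReal
      (3 ^ d * (2 * L * (2 * ρ₁) ^ (d - 1)) + (2 * N + 1) ^ d * (2 * L * (2 * ρ₂) ^ (d - 1))) := by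
  have hcard : (latticeBox d N \ latticeBox d 1).card ≤ (2 * N + 1) ^ d :=
    (Finset.card_le_card Finset.sdiff_subset).trans (card_latticeBox d N).le
  calc volume (collisionSet p L ρ₁ ρ₂ N)
      ≤ (latticeBox d 1).card * ENNReal.ofReal (2 * L * (2 * ρ₁) ^ (d - 1))
        + (latticeBox d N \ latticeBox d 1).card * ENNReal.ofReal (2 * L * (2 * ρ₂) ^ (d - 1)) := by
        refine (measure_union_le _ _).trans (add_le_add ?_ ?_) <;>
          simpa only [finrank_euclideanSpace_fin] using
            volume_biUnion_tube_le _ (fun m _ => hp m) hL (by assumption)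
    _ ≤ ((3 ^ d : ℕ) : ℝ≥0∞) * ENNReal.ofReal (2 * L * (2 * ρ₁) ^ (d - 1))
        + (((2 * N + 1) ^ d : ℕ) : ℝ≥0∞) * ENNReal.ofReal (2 * L * (2 * ρ₂) ^ (d - 1)) := by
        gcongr
        exact (card_latticeBox d 1).le
    _ = ENNReal.ofReal (((3 ^ d : ℕ) : ℝ) * (2 * L * (2 * ρ₁) ^ (d - 1))
        + (((2 * N + 1) ^ d : ℕ) : ℝ) * (2 * L * (2 * ρ₂) ^ (d - 1))) := by
        rw [ENNReal.ofReal_add (by positivity) (by positivity),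
          ENNReal.ofReal_mul (Nat.cast_nonneg _), ENNReal.ofReal_mul (Nat.cast_nonneg _),
          ENNReal.ofReal_natCast, ENNReal.ofReal_natCast]
    _ = _ := by push_cast; rfl

lemma mem_collisionSet {p w : Vel d} {m : Fin d → ℤ} {u t δ L ρ₁ ρ₂ r₀ : ℝ} {N : ℕ}
    (hp : ∀ i, |p i| ≤ 1 / 2) (hq : ∀ m, r₀ ≤ ‖p - intVec m‖) (hw : ‖w‖ ≤ L)
    (hu : u ∈ Set.Icc 0 t) (hm : ‖p - u • w - intVec m‖ ≤ δ) (hδ : 0 < δ)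
    (hδr₀ : 2 * δ ≤ r₀) (hδ1 : 2 * δ ≤ 1) (hρ₁ : 2 * δ * L ≤ ρ₁ * r₀) (hρ₂ : 2 * δ * L ≤ ρ₂)
    (hN : t * L + 1 ≤ N) : w ∈ collisionSet p L ρ₁ ρ₂ N := by
  have hu0 : 0 < u := by
    refine hu.1.lt_of_ne fun h => ?_
    rw [← h, zero_smul, sub_zero] at hm
    linarith [hq m]
  have hmem : ∀ ρ r, 0 < r → 2 * δ ≤ r → r ≤ ‖p - intVec m‖ → 2 * δ * L ≤ ρ * r →
      w ∈ tube (p - intVec m) L ρ := fun ρ r hr hδr hrq hρ =>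
    mem_tube_of_norm_smul_sub_le hw hu0 (by rwa [norm_sub_rev, sub_right_comm]) hr hδr hrq hρ
  by_cases hnear : m ∈ latticeBox d 1
  · exact .inl (Set.mem_biUnion hnear (hmem ρ₁ r₀ (by linarith) hδr₀ (hq m) hρ₁))
  · have hbox : m ∈ latticeBox d N := by
      refine mem_latticeBox_of_norm_sub_intVec_le hp (hm.trans (by linarith)) ?_
      rw [norm_smul, Real.norm_of_nonneg hu.1]
      nlinarith [hu.2, norm_nonneg w]
    exact .inr (Set.mem_biUnion (Finset.mem_sdiff.2 ⟨hbox, hnear⟩)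
      (hmem ρ₂ 1 one_pos hδ1 (one_le_norm_sub_intVec hp hnear) (by rwa [mul_one])))

end CollisionSet

theorem free_flow_no_collision_general
    (d : ℕ) :
    ∃ C > (0:ℝ), ∀ t E ε abar ε₀ : ℝ,
      0 < t → 0 < E → 0 < ε → ε ≤ abar → 6 * abar ≤ ε₀ → ε₀ ≤ 1 →
      ∀ (x₁ x₂ : Torus d) (v₁ : Vel d), ε₀ ≤ tdist x₁ x₂ → ‖v₁‖ ≤ E →
      ∃ K : Set (Vel d), MeasurableSet K ∧
        volume K ≤ ENNReal.ofReal
          (C * E ^ d * ((abar / ε₀) ^ (d - 1) + (E * t) ^ d * abar ^ (d - 1))) ∧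
        ∀ v₂ : Vel d, ‖v₂‖ ≤ E → v₁ - v₂ ∉ K →
          ∀ y₁ y₂ : Torus d, tdist y₁ x₁ ≤ abar → tdist y₂ x₂ ≤ abar →
            ∀ u ∈ Set.Icc (0:ℝ) t, ε < tdist (flow y₁ u v₁) (flow y₂ u v₂) := by
  refine ⟨4 * 24 ^ (d - 1) * (3 ^ d + 10 ^ d), by positivity, ?_⟩
  intro t E ε abar ε₀ ht hE hε hεa hε₀ hε₀1 x₁ x₂ v₁ hx hv₁
  have habar : 0 < abar := hε.trans_le hεa
  have hε₀0 : 0 < ε₀ := by linarith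
  have hd : 0 < d := Nat.pos_of_ne_zero fun h => by subst h; simp [tdist] at hx; linarith
  obtain ⟨p, hp, hp_half⟩ := exists_toTorus_eq_of_abs_le_half (x₁ - x₂)
  have hq : ∀ m, ε₀ ≤ ‖p - intVec m‖ := fun m =>
    hx.trans (by rw [tdist_eq_norm, ← hp]; exact norm_toLp_toTorus_le p m)
  set N : ℕ := ⌈2 * E * t⌉₊ + 1 with hN
  have hN' : (N : ℝ) ≤ 2 * E * t + 2 := by
    rw [hN]; push_cast; linarith [Nat.ceil_lt_add_one (by positivity : 0 ≤ 2 * E * t)]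
  refine ⟨collisionSet p (2 * E) (12 * abar * E / ε₀) (12 * abar * E) N,
    measurableSet_collisionSet .., ?_, ?_⟩
  · refine (volume_collisionSet_le (fun m => norm_pos_iff.1 (by linarith [hq m])) (by positivity)
      (by positivity) (by positivity) N).trans (ENNReal.ofReal_le_ofReal ?_)
    exact tube_volume_sum_le hd hE.le ht.le habar.le hε₀0 hε₀1 hN'
  · intro v₂ hv₂ hK y₁ y₂ hy₁ hy₂ u hu
    by_contra! hcol
    obtain ⟨m, hm⟩ := exists_norm_sub_intVec_le_of_tdist_flow_le hp hy₁ hy₂ hcol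
    refine hK (mem_collisionSet (δ := 3 * abar) hp_half hq ((norm_sub_le _ _).trans (by linarith))
      hu (hm.trans (by linarith)) (by linarith) (by linarith) (by linarith) ?_ (by linarith)
      (by rw [hN]; push_cast; linarith [Nat.le_ceil (2 * E * t)]))
    rw [div_mul_cancel₀ _ hε₀0.ne']
    linarith

/-- Geometric control of free trajectories on the torus (no near-collision on `[0,t]`):
given `x₁⁰, x₂⁰` at distance at least `ε₀` and `|v₁| ≤ E`, there is a bad set `K` of
velocities of measure at most `C E^d ((ā/ε₀)^{d-1} + (Et)^d ā^{d-1})` such that if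
`v₁ - v₂ ∉ K`, `|v₂| ≤ E`, and `x₁, x₂` are `ā`-close to `x₁⁰, x₂⁰`, then
`d(x₁ - u v₁, x₂ - u v₂) > ε` for all `u ∈ [0,t]`. -/
theorem free_flow_no_collision
    (d : ℕ) (hd : 2 ≤ d) :
    ∃ C > (0:ℝ), ∀ t E ε abar ε₀ : ℝ,
      0 < t → 0 < E → 0 < ε → ε ≤ abar → 6 * abar ≤ ε₀ → ε₀ ≤ 1 →
      ∀ (x₁ x₂ : Torus d) (v₁ : Vel d), ε₀ ≤ tdist x₁ x₂ → ‖v₁‖ ≤ E →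
      ∃ K : Set (Vel d), MeasurableSet K ∧
        volume K ≤ ENNReal.ofReal
          (C * E ^ d * ((abar / ε₀) ^ (d - 1) + (E * t) ^ d * abar ^ (d - 1))) ∧
        ∀ v₂ : Vel d, ‖v₂‖ ≤ E → v₁ - v₂ ∉ K →
          ∀ y₁ y₂ : Torus d, tdist y₁ x₁ ≤ abar → tdist y₂ x₂ ≤ abar →
            ∀ u ∈ Set.Icc (0:ℝ) t, ε < tdist (flow y₁ u v₁) (flow y₂ u v₂) :=
  free_flow_no_collision_general d
end
end
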